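/- Let m, p ∈ ℕ, let g : (0,∞) → ℝ lie in D^p ∩ K^{p+m}, and let f : (0,∞) → ℝ satisfy Δ^{m+1} f = g on (0,∞), f(k) = 0 for k = 1,…,m+1, and Δ^k f ∈ K^{p+m} for k = 0,…,m. Then for every x > 0, f(x) = lim_{n→∞} [ Σ_{k=1}^{n−1} C(n−k−1, m)·g(k) − Σ_{k=0}^{n−1} C(n−k−1, m)·g(x+k) + Σ_{j=1}^{p+m} C(x, j)·Δ^j f(n) − Σ_{j=1}^{m} C(n, j)·Δ^j f(x) ]. -/

import Mathlib

open Finset Filter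

/-- Forward difference operator: `Δ f x = f (x + 1) - f x`. -/
noncomputable def fdiff (f : ℝ → ℝ) : ℝ → ℝ := fun x => f (x + 1) - f x

/-- Generalized binomial coefficient `C(x, j) = x (x-1) ⋯ (x-j+1) / j!`. -/
noncomputable def gbinom (x : ℝ) (j : ℕ) : ℝ :=
  (∏ i ∈ Finset.range j, (x - i)) / (Nat.factorial j)

/-- Divided difference of `f` at the points `x 0, …, x (n-1)`. -/
noncomputable def divDiff (f : ℝ → ℝ) {n : ℕ} (x : Fin n → ℝ) : ℝ :=
  ∑ i, f (x i) / ∏ j ∈ Finset.univ.erase i, (x i - x j)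

/-- `f` is `p`-convex on the set `S`: every divided difference of `f`
at `p + 2` pairwise distinct points of `S` is nonnegative. -/
def ConvexOrderOn (f : ℝ → ℝ) (p : ℕ) (S : Set ℝ) : Prop :=
  ∀ x : Fin (p + 2) → ℝ, (∀ i, x i ∈ S) → Function.Injective x → 0 ≤ divDiff f x

/-- The class `K^p`: functions that are eventually `p`-convex or eventually `p`-concave. -/
def EvK (p : ℕ) (f : ℝ → ℝ) : Prop :=
  (∃ a > (0 : ℝ), ConvexOrderOn f p (Set.Ioi a)) ∨
    (∃ a > (0 : ℝ), ConvexOrderOn (fun x => -f x) p (Set.Ioi a))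

/-- The class `D^p`: functions with `Δ^p f (n) → 0` as `n → ∞` along the integers. -/
def DD (p : ℕ) (f : ℝ → ℝ) : Prop :=
  Filter.Tendsto (fun n : ℕ => (fdiff^[p] f) n) Filter.atTop (nhds 0)

/-- The digamma function `ψ = Γ'/Γ`. -/
noncomputable def digamma (x : ℝ) : ℝ := deriv Real.Gamma x / Real.Gamma x

/-- A multiple-gamma sequence: `G 0 = id`, `G (m+1) (x+1) = G m x * G (m+1) x`,
`G m 1 = 1`, each `G m` is positive and `C^∞` on `(0,∞)`, and the `m`-th derivative
of `ln ∘ G m` is increasing on `(0,∞)`. -/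
def IsMultipleGammaSeq (G : ℕ → ℝ → ℝ) : Prop :=
  (∀ m, ∀ x > (0 : ℝ), 0 < G m x) ∧
  (∀ m, ContDiffOn ℝ (⊤ : ℕ∞) (G m) (Set.Ioi 0)) ∧
  (∀ x > (0 : ℝ), G 0 x = x) ∧
  (∀ m, ∀ x > (0 : ℝ), G (m + 1) (x + 1) = G m x * G (m + 1) x) ∧
  (∀ m, G m 1 = 1) ∧
  (∀ m, StrictMonoOn
    (iteratedDerivWithin m (fun x => Real.log (G m x)) (Set.Ioi 0)) (Set.Ioi 0))

namespace Stmt7Aux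

noncomputable def dd (f : ℝ → ℝ) (s : Finset ℝ) : ℝ :=
  ∑ a ∈ s, f a / ∏ b ∈ s.erase a, (a - b)

lemma dd_singleton (f : ℝ → ℝ) (a : ℝ) : dd f {a} = f a := by
  simp [dd]

lemma dd_expand (f : ℝ → ℝ) {s : Finset ℝ} {w : ℝ} (hw : w ∉ s) :
    dd f (insert w s) =
      f w / ∏ b ∈ s, (w - b) + ∑ a ∈ s, f a / ((a - w) * ∏ b ∈ s.erase a, (a - b)) := by
  rw [dd, Finset.sum_insert hw, Finset.erase_insert hw]
  congr 1
  refine Finset.sum_congr rfl fun a ha => ?_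
  have haw : w ≠ a := fun h => hw (h ▸ ha)
  rw [Finset.erase_insert_of_ne haw,
    Finset.prod_insert (fun h => hw (Finset.mem_of_mem_erase h))]

lemma dd_rec (f : ℝ → ℝ) {s : Finset ℝ} {u v : ℝ} (hu : u ∉ s) (hv : v ∉ s) (huv : u ≠ v) :
    dd f (insert u s) - dd f (insert v s) = (u - v) * dd f (insert u (insert v s)) := by
  have huv' : u - v ≠ 0 := sub_ne_zero.mpr huv
  have hvu' : v - u ≠ 0 := sub_ne_zero.mpr (Ne.symm huv)
  have hu2 : u ∉ insert v s := by simp [huv, hu]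
  have hQ : ∀ a ∈ s, (∏ b ∈ s.erase a, (a - b)) ≠ 0 := by
    intro a ha
    exact Finset.prod_ne_zero_iff.mpr fun b hb =>
      sub_ne_zero.mpr (Finset.ne_of_mem_erase hb).symm
  have hPu : (∏ b ∈ s, (u - b)) ≠ 0 :=
    Finset.prod_ne_zero_iff.mpr fun b hb => sub_ne_zero.mpr (fun h => hu (h ▸ hb))
  have hPv : (∏ b ∈ s, (v - b)) ≠ 0 :=
    Finset.prod_ne_zero_iff.mpr fun b hb => sub_ne_zero.mpr (fun h => hv (h ▸ hb))
  rw [dd_expand f hu, dd_expand f hv, dd_expand f hu2,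
    Finset.prod_insert hv, Finset.sum_insert hv, Finset.erase_insert hv]
  have hsum2 : ∑ a ∈ s, f a / ((a - u) * ∏ b ∈ (insert v s).erase a, (a - b)) =
      ∑ a ∈ s, f a / ((a - u) * ((a - v) * ∏ b ∈ s.erase a, (a - b))) := by
    refine Finset.sum_congr rfl fun a ha => ?_
    rw [Finset.erase_insert_of_ne (show v ≠ a from fun h => hv (h ▸ ha)),
      Finset.prod_insert (fun h => hv (Finset.mem_of_mem_erase h))]
  rw [hsum2, mul_add, mul_add, Finset.mul_sum]
  have e1 : (u - v) * (f u / ((u - v) * ∏ b ∈ s, (u - b))) = f u / ∏ b ∈ s, (u - b) := by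
    field_simp
  have e2 : (u - v) * (f v / ((v - u) * ∏ b ∈ s, (v - b))) = -(f v / ∏ b ∈ s, (v - b)) := by
    field_simp
    ring
  have e3 : ∑ a ∈ s, (u - v) * (f a / ((a - u) * ((a - v) * ∏ b ∈ s.erase a, (a - b)))) =
      ∑ a ∈ s, (f a / ((a - u) * ∏ b ∈ s.erase a, (a - b))
        - f a / ((a - v) * ∏ b ∈ s.erase a, (a - b))) := by
    refine Finset.sum_congr rfl fun a ha => ?_
    have hau : a - u ≠ 0 := sub_ne_zero.mpr fun h => hu (h ▸ ha)
    have hav : a - v ≠ 0 := sub_ne_zero.mpr fun h => hv (h ▸ ha)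
    have hQa := hQ a ha
    field_simp
    ring
  rw [e1, e2, e3, Finset.sum_sub_distrib]
  ring

lemma dd_nonneg {f : ℝ → ℝ} {q : ℕ} {a : ℝ} (hf : ConvexOrderOn f q (Set.Ioi a))
    {s : Finset ℝ} (hcard : s.card = q + 2) (hs : ∀ t ∈ s, a < t) : 0 ≤ dd f s := by
  have e := s.orderIsoOfFin hcard
  set x : Fin (q + 2) → ℝ := fun i => (e i : ℝ) with hx
  have hinj : Function.Injective x := by
    intro i j h
    exact e.injective (Subtype.ext h)
  have hmem : ∀ i, x i ∈ Set.Ioi a := fun i => hs _ (e i).2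
  have h := hf x hmem hinj
  have heq : divDiff f x = dd f s := by
    rw [divDiff, dd]
    refine Finset.sum_bij (fun i _ => x i) (fun i _ => (e i).2) ?_ ?_ ?_
    · intro i _ j _ h
      exact hinj h
    · intro b hb
      exact ⟨e.symm ⟨b, hb⟩, Finset.mem_univ _, by simp [hx]⟩
    · intro i _
      congr 1
      refine Finset.prod_bij (fun j _ => x j) ?_ ?_ ?_ ?_
      · intro j hj
        refine Finset.mem_erase.mpr ⟨fun h => (Finset.ne_of_mem_erase hj) (hinj h), (e j).2⟩
      · intro j₁ h₁ j₂ h₂ h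
        exact hinj h
      · intro b hb
        refine ⟨e.symm ⟨b, Finset.mem_of_mem_erase hb⟩, ?_, by simp [hx]⟩
        refine Finset.mem_erase.mpr ⟨fun h => Finset.ne_of_mem_erase hb ?_, Finset.mem_univ _⟩
        have : x (e.symm ⟨b, Finset.mem_of_mem_erase hb⟩) = b := by simp [hx]
        rw [← this, h]
      · intro j _
        rfl
  linarith [heq ▸ h]

noncomputable def nodes (n : ℝ) (k : ℕ) : Finset ℝ := (Finset.range (k+1)).image (fun i : ℕ => n + i)

noncomputable def nodes' (n : ℝ) (k : ℕ) : Finset ℝ := (Finset.range k).image (fun i : ℕ => (n+1) + i)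

lemma mem_nodes {t n : ℝ} {k : ℕ} : t ∈ nodes n k ↔ ∃ i : ℕ, i ≤ k ∧ t = n + i := by
  simp [nodes, Nat.lt_succ_iff, eq_comm]

lemma mem_nodes' {t n : ℝ} {k : ℕ} : t ∈ nodes' n k ↔ ∃ i : ℕ, i < k ∧ t = (n+1) + i := by
  simp [nodes', eq_comm]

lemma nodes_zero (n : ℝ) : nodes n 0 = {n} := by
  simp [nodes]

lemma nodes_succ (n : ℝ) (k : ℕ) : nodes n (k+1) = insert (n + ((k:ℝ)+1)) (nodes n k) := by
  rw [nodes, Finset.range_add_one, Finset.image_insert]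
  push_cast
  rfl

lemma nodes'_succ (n : ℝ) (k : ℕ) : nodes' n (k+1) = insert ((n+1) + (k:ℝ)) (nodes' n k) := by
  rw [nodes', Finset.range_add_one, Finset.image_insert]
  rfl

lemma nodes'_eq (n : ℝ) (k : ℕ) : nodes (n+1) k = nodes' n (k+1) := rfl

lemma nodes_eq_insert (n : ℝ) (k : ℕ) : nodes n k = insert n (nodes' n k) := by
  ext t
  rw [mem_nodes, Finset.mem_insert, mem_nodes']
  constructor
  · rintro ⟨i, hi, rfl⟩
    cases i with
    | zero => left; norm_num
    | succ i => right; exact ⟨i, by omega, by push_cast; ring⟩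
  · rintro (rfl | ⟨i, hi, rfl⟩)
    · exact ⟨0, by omega, by norm_num⟩
    · exact ⟨i + 1, by omega, by push_cast; ring⟩

lemma not_mem_nodes' {t n : ℝ} {k : ℕ} (h : ∀ i : ℕ, i < k → t ≠ (n+1) + i) : t ∉ nodes' n k := by
  rw [mem_nodes']
  rintro ⟨i, hi, rfl⟩
  exact h i hi rfl

lemma not_mem_nodes {t n : ℝ} {k : ℕ} (h : ∀ i : ℕ, i ≤ k → t ≠ n + i) : t ∉ nodes n k := by
  rw [mem_nodes]
  rintro ⟨i, hi, rfl⟩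
  exact h i hi rfl

lemma nodes_card (n : ℝ) (k : ℕ) : (nodes n k).card = k + 1 := by
  rw [nodes, Finset.card_image_of_injOn, Finset.card_range]
  intro i _ j _ h
  simp only [add_right_inj, Nat.cast_inj] at h
  exact h

lemma fdiff_succ_apply (F : ℝ → ℝ) (k : ℕ) (t : ℝ) :
    fdiff^[k+1] F t = fdiff^[k] F (t+1) - fdiff^[k] F t := by
  rw [Function.iterate_succ_apply' fdiff k F]
  rfl

lemma dd_nodes (f : ℝ → ℝ) : ∀ (k : ℕ) (n : ℝ),
    dd f (nodes n k) = fdiff^[k] f n / (Nat.factorial k) := by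
  intro k
  induction k with
  | zero => intro n; rw [nodes_zero, dd_singleton]; simp
  | succ k ih =>
    intro n
    have hu : (n+1) + (k:ℝ) ∉ nodes' n k := by
      refine not_mem_nodes' fun i hi h => ?_
      have : (k : ℝ) = i := by linarith
      have : k = i := by exact_mod_cast this
      omega
    have hv : n ∉ nodes' n k := by
      refine not_mem_nodes' fun i hi h => ?_
      have : (0:ℝ) < 1 + i := by positivity
      linarith
    have huv : (n+1) + (k:ℝ) ≠ n := by
      have : (0:ℝ) ≤ (k:ℝ) := Nat.cast_nonneg k
      intro h; linarith
    have h := dd_rec f hu hv huv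
    rw [← nodes'_succ, ← nodes'_eq, Finset.insert_comm, ← nodes'_succ, ← nodes'_eq,
      ← nodes_eq_insert] at h
    rw [show insert n (nodes (n+1) k) = nodes n (k+1) by rw [nodes'_eq, ← nodes_eq_insert]] at h
    rw [ih (n+1), ih n] at h
    have hk : ((n+1) + (k:ℝ)) - n = (k:ℝ) + 1 := by ring
    rw [hk] at h
    have hfac : (Nat.factorial (k+1) : ℝ) = ((k:ℝ)+1) * (Nat.factorial k) := by
      rw [Nat.factorial_succ]; push_cast; ring
    have hk0 : ((k:ℝ)+1) ≠ 0 := by positivity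
    have hfk : (Nat.factorial k : ℝ) ≠ 0 := by positivity
    rw [fdiff_succ_apply]
    rw [eq_div_iff (by rw [hfac]; positivity)]
    rw [hfac]
    have := h
    field_simp at this ⊢
    linarith [this]

lemma newton (f : ℝ → ℝ) : ∀ (q : ℕ) (n t : ℝ), t ∉ nodes n q →
    f t = (∑ j ∈ Finset.range (q+1), gbinom (t - n) j * fdiff^[j] f n)
      + (∏ i ∈ Finset.range (q+1), (t - n - i)) * dd f (insert t (nodes n q)) := by
  intro q
  induction q with
  | zero =>
    intro n t ht
    rw [nodes_zero] at ht ⊢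
    have htn : t - n ≠ 0 := sub_ne_zero.mpr (by simpa using ht)
    rw [dd_expand f ht]
    simp only [Finset.prod_singleton, Finset.sum_singleton, Finset.erase_singleton,
      Finset.prod_empty, zero_add, Finset.sum_range_one, Finset.prod_range_one, mul_one,
      Nat.cast_zero, sub_zero]
    rw [show gbinom (t - n) 0 = 1 by simp [gbinom]]
    have hnt : n - t ≠ 0 := fun h => htn (by linarith [sub_eq_zero.mp h])
    rw [show f t / (t - n) + f n / (n - t) = (f t - f n) / (t - n) by field_simp; ring]
    field_simp
    rw [Function.iterate_zero_apply]; ring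
  | succ q ih =>
    intro n t ht
    have hsub : nodes n q ⊆ nodes n (q+1) := by
      rw [nodes_succ]; exact Finset.subset_insert _ _
    have ht' : t ∉ nodes n q := fun h => ht (hsub h)
    have hv : n + ((q:ℝ)+1) ∉ nodes n q := by
      refine not_mem_nodes fun i hi h => ?_
      have h1 : (q:ℝ) + 1 = i := by linarith
      have h2 : q + 1 = i := by exact_mod_cast h1
      omega
    have huv : t ≠ n + ((q:ℝ)+1) := by
      intro h
      exact ht (by rw [nodes_succ]; exact h ▸ Finset.mem_insert_self _ _)
    have hrec := dd_rec f ht' hv huv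
    rw [← nodes_succ] at hrec
    have hnq := dd_nodes f (q+1) n
    have hdd : dd f (insert t (nodes n q)) = fdiff^[q+1] f n / (Nat.factorial (q+1))
        + (t - n - ((q:ℝ)+1)) * dd f (insert t (nodes n (q+1))) := by
      linear_combination hrec + hnq
    rw [ih n t ht', hdd]
    conv_rhs => rw [Finset.sum_range_succ, Finset.prod_range_succ]
    rw [show gbinom (t - n) (q+1)
        = (∏ i ∈ Finset.range (q+1), (t - n - i)) / (Nat.factorial (q+1)) from rfl]
    push_cast
    ring

lemma prod_range_fact (q : ℕ) : (∏ i ∈ Finset.range q, ((i:ℝ)+1)) = (Nat.factorial q : ℝ) := by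
  induction q with
  | zero => simp
  | succ q ih =>
    rw [Finset.prod_range_succ, ih, Nat.factorial_succ]
    push_cast
    ring

lemma bound {f : ℝ → ℝ} {q : ℕ} {a : ℝ} (hf : ConvexOrderOn f q (Set.Ioi a))
    {n x : ℝ} (hn : a < n) (hx0 : 0 < x) (hx1 : x < 1) :
    |f (n + x) - ∑ j ∈ Finset.range (q+1), gbinom x j * fdiff^[j] f n| ≤ fdiff^[q+1] f n := by
  have hxn : n + x ∉ nodes n q := by
    refine not_mem_nodes fun i hi h => ?_
    have hxi : x = i := by linarith
    rcases Nat.eq_zero_or_pos i with h0 | h0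
    · rw [h0] at hxi; norm_num at hxi; linarith
    · have : (1:ℝ) ≤ i := by exact_mod_cast h0
      linarith
  have hxn' : n + x ∉ nodes' n q := by
    refine not_mem_nodes' fun i hi h => ?_
    have : (0:ℝ) ≤ i := Nat.cast_nonneg i
    linarith
  have hxn1 : n + x ∉ nodes (n+1) q := by
    refine not_mem_nodes fun i hi h => ?_
    have : (0:ℝ) ≤ i := Nat.cast_nonneg i
    linarith
  have hnn' : n ∉ nodes' n q := by
    refine not_mem_nodes' fun i hi h => ?_
    have : (0:ℝ) ≤ i := Nat.cast_nonneg i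
    linarith
  have hun' : (n+1) + (q:ℝ) ∉ nodes' n q := by
    refine not_mem_nodes' fun i hi h => ?_
    have h1 : (q:ℝ) = i := by linarith
    have h2 : q = i := by exact_mod_cast h1
    omega
  have hxnn : n + x ≠ n := by intro h; linarith
  have huvx : (n+1) + (q:ℝ) ≠ n + x := by
    have : (0:ℝ) ≤ q := Nat.cast_nonneg q
    intro h; linarith
  -- nonnegativity of the two relevant divided differences
  have hmemD : ∀ t ∈ insert (n+x) (nodes n q), a < t := by
    intro t htm
    rcases Finset.mem_insert.mp htm with rfl | htm
    · linarith
    · obtain ⟨i, hi, rfl⟩ := mem_nodes.mp htm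
      have : (0:ℝ) ≤ i := Nat.cast_nonneg i
      linarith
  have hmemE : ∀ t ∈ insert (n+x) (nodes (n+1) q), a < t := by
    intro t htm
    rcases Finset.mem_insert.mp htm with rfl | htm
    · linarith
    · obtain ⟨i, hi, rfl⟩ := mem_nodes.mp htm
      have : (0:ℝ) ≤ i := Nat.cast_nonneg i
      linarith
  have hcardD : (insert (n+x) (nodes n q)).card = q + 2 := by
    rw [Finset.card_insert_of_notMem hxn, nodes_card]
  have hcardE : (insert (n+x) (nodes (n+1) q)).card = q + 2 := by
    rw [Finset.card_insert_of_notMem hxn1, nodes_card]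
  have hD : 0 ≤ dd f (insert (n+x) (nodes n q)) := dd_nonneg hf hcardD hmemD
  have hE : 0 ≤ dd f (insert (n+x) (nodes (n+1) q)) := dd_nonneg hf hcardE hmemE
  set D := dd f (insert (n+x) (nodes n q)) with hDdef
  set E := dd f (insert (n+x) (nodes (n+1) q)) with hEdef
  -- recurrence 1 : A - B = x * D
  have hrec1 := dd_rec f hxn' hnn' hxnn
  rw [← nodes_eq_insert] at hrec1
  -- recurrence 2 : B' - A = (1+q-x) * E
  have hrec2 := dd_rec f hun' hxn' huvx
  rw [← nodes'_succ, ← nodes'_eq, Finset.insert_comm, ← nodes'_succ, ← nodes'_eq] at hrec2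
  -- values at consecutive nodes
  have hB := dd_nodes f q n
  have hB' := dd_nodes f q (n+1)
  have hfq : (0:ℝ) < (Nat.factorial q : ℝ) := by positivity
  have hBB : dd f (nodes (n+1) q) - dd f (nodes n q) = fdiff^[q+1] f n / (Nat.factorial q) := by
    rw [hB, hB', fdiff_succ_apply]
    ring
  have h1 : 0 ≤ x * D := mul_nonneg hx0.le hD
  have h2 : x * D ≤ fdiff^[q+1] f n / (Nat.factorial q) := by
    have hc : 0 ≤ ((n+1) + (q:ℝ)) - (n + x) := by
      have : (0:ℝ) ≤ q := Nat.cast_nonneg q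
      linarith
    nlinarith [mul_nonneg hc hE]
  -- Newton remainder
  have hN := newton f q n (n + x) hxn
  have hxe : n + x - n = x := by ring
  rw [hxe] at hN
  have hNewt : f (n + x) - ∑ j ∈ Finset.range (q+1), gbinom x j * fdiff^[j] f n
      = (∏ i ∈ Finset.range (q+1), (x - i)) * D := by
    rw [hN]; ring
  rw [hNewt, abs_mul, Finset.abs_prod, abs_of_nonneg hD]
  rw [Finset.prod_range_succ']
  have habs0 : |x - ((0:ℕ):ℝ)| = x := by
    rw [Nat.cast_zero, sub_zero, abs_of_pos hx0]
  have habs : ∀ i ∈ Finset.range q, |x - (((i+1:ℕ)):ℝ)| = ((i:ℝ)+1) - x := by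
    intro i _
    have h1 : ((i+1:ℕ):ℝ) = (i:ℝ) + 1 := by push_cast; ring
    rw [h1, abs_of_nonpos (by
      have : (0:ℝ) ≤ i := Nat.cast_nonneg i
      linarith)]
    ring
  rw [habs0, Finset.prod_congr rfl habs]
  have hP1 : (∏ i ∈ Finset.range q, (((i:ℝ)+1) - x)) ≤ (Nat.factorial q : ℝ) := by
    rw [← prod_range_fact]
    refine Finset.prod_le_prod (fun i _ => ?_) (fun i _ => ?_)
    · have : (0:ℝ) ≤ i := Nat.cast_nonneg i
      linarith
    · linarith
  have hP0 : 0 ≤ (∏ i ∈ Finset.range q, (((i:ℝ)+1) - x)) := by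
    refine Finset.prod_nonneg fun i _ => ?_
    have : (0:ℝ) ≤ i := Nat.cast_nonneg i
    linarith
  calc (∏ i ∈ Finset.range q, (((i:ℝ)+1) - x)) * x * D
      = (∏ i ∈ Finset.range q, (((i:ℝ)+1) - x)) * (x * D) := by ring
    _ ≤ (Nat.factorial q : ℝ) * (fdiff^[q+1] f n / (Nat.factorial q)) :=
        mul_le_mul hP1 h2 h1 hfq.le
    _ = fdiff^[q+1] f n := by field_simp

lemma fdiff_iter_neg (F : ℝ → ℝ) : ∀ (k : ℕ) (t : ℝ),
    fdiff^[k] (fun s => -F s) t = -(fdiff^[k] F t) := by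
  intro k
  induction k with
  | zero => intro t; rfl
  | succ k ih => intro t; rw [fdiff_succ_apply, fdiff_succ_apply, ih, ih]; ring

lemma fdiff_iter_congr {F G : ℝ → ℝ} (h : ∀ t > (0:ℝ), F t = G t) :
    ∀ (k : ℕ), ∀ t > (0:ℝ), fdiff^[k] F t = fdiff^[k] G t := by
  intro k
  induction k with
  | zero => intro t ht; exact h t ht
  | succ k ih =>
    intro t ht
    rw [fdiff_succ_apply, fdiff_succ_apply, ih t ht, ih (t+1) (by linarith)]

lemma fdiff_iter_zero : ∀ (j : ℕ) (F : ℝ → ℝ) (t : ℝ),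
    (∀ i : ℕ, i ≤ j → F (t + i) = 0) → fdiff^[j] F t = 0 := by
  intro j
  induction j with
  | zero => intro F t h; simpa using h 0 (le_refl 0)
  | succ j ih =>
    intro F t h
    rw [Function.iterate_succ_apply]
    refine ih (fdiff F) t fun i hi => ?_
    show F (t + i + 1) - F (t + i) = 0
    rw [show t + (i:ℝ) + 1 = t + ((i+1:ℕ):ℝ) by push_cast; ring, h (i+1) (by omega),
      h i (by omega)]
    ring

lemma gbinom_zero (y : ℝ) : gbinom y 0 = 1 := by simp [gbinom]

lemma gbinom_zero_left (j : ℕ) : gbinom 0 (j+1) = 0 := by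
  rw [show gbinom 0 (j+1)
    = (∏ i ∈ Finset.range (j+1), ((0:ℝ) - i)) / (Nat.factorial (j+1)) from rfl]
  rw [Finset.prod_eq_zero (Finset.mem_range.mpr (Nat.succ_pos j)) (by norm_num)]
  simp

lemma gbinom_one_big (j : ℕ) : gbinom 1 (j+2) = 0 := by
  rw [show gbinom 1 (j+2)
    = (∏ i ∈ Finset.range (j+2), ((1:ℝ) - i)) / (Nat.factorial (j+2)) from rfl]
  rw [Finset.prod_eq_zero (Finset.mem_range.mpr (by omega : 1 < j+2)) (by norm_num)]
  simp

lemma gbinom_one_one : gbinom 1 1 = 1 := by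
  rw [show gbinom 1 1 = (∏ i ∈ Finset.range 1, ((1:ℝ) - i)) / (Nat.factorial 1) from rfl]
  simp

lemma gbinom_pascal (y : ℝ) (j : ℕ) : gbinom (y+1) (j+1) = gbinom y (j+1) + gbinom y j := by
  have e1 : gbinom (y+1) (j+1)
      = (∏ i ∈ Finset.range (j+1), (y + 1 - i)) / (Nat.factorial (j+1)) := rfl
  have e2 : gbinom y (j+1)
      = (∏ i ∈ Finset.range (j+1), (y - i)) / (Nat.factorial (j+1)) := rfl
  have e3 : gbinom y j = (∏ i ∈ Finset.range j, (y - i)) / (Nat.factorial j) := rfl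
  rw [e1, e2, e3]
  have h1 : (∏ i ∈ Finset.range (j+1), (y + 1 - (i:ℝ)))
      = (∏ i ∈ Finset.range j, (y - (i:ℝ))) * (y+1) := by
    rw [Finset.prod_range_succ']
    congr 1
    · exact Finset.prod_congr rfl fun i _ => by push_cast; ring
    · norm_num
  rw [h1, Finset.prod_range_succ]
  have hfac : (Nat.factorial (j+1) : ℝ) = ((j:ℝ)+1) * (Nat.factorial j) := by
    rw [Nat.factorial_succ]; push_cast; ring
  rw [hfac]
  have h2 : (Nat.factorial j : ℝ) ≠ 0 := by positivity
  have h3 : ((j:ℝ)+1) ≠ 0 := by positivity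
  field_simp
  ring

noncomputable def rho (f : ℝ → ℝ) (q : ℕ) (x : ℝ) (n : ℕ) : ℝ :=
  f (x + n) - ∑ j ∈ Finset.range (q+1), gbinom x j * fdiff^[j] f n

lemma rho_rec (f : ℝ → ℝ) (q : ℕ) (x : ℝ) (n : ℕ) :
    rho f q (x+1) n = rho f q x (n+1) + gbinom x q * fdiff^[q+1] f n := by
  rw [rho, rho]
  have hcast : ((n+1:ℕ):ℝ) = (n:ℝ)+1 := by push_cast; ring
  rw [hcast]
  have harg : x + 1 + (n:ℝ) = x + ((n:ℝ)+1) := by ring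
  rw [harg]
  have E1 : ∑ j ∈ Finset.range (q+1), gbinom x j * fdiff^[j] f ((n:ℝ)+1)
      = ∑ j ∈ Finset.range (q+1), gbinom x j * fdiff^[j] f (n:ℝ)
        + ∑ j ∈ Finset.range (q+1), gbinom x j * fdiff^[j+1] f (n:ℝ) := by
    rw [← Finset.sum_add_distrib]
    refine Finset.sum_congr rfl fun j _ => ?_
    rw [show fdiff^[j] f ((n:ℝ)+1) = fdiff^[j] f (n:ℝ) + fdiff^[j+1] f (n:ℝ) by
      rw [fdiff_succ_apply]; ring]
    ring
  have E2 : ∑ j ∈ Finset.range (q+1), gbinom x j * fdiff^[j+1] f (n:ℝ)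
      = ∑ j ∈ Finset.range q, gbinom x j * fdiff^[j+1] f (n:ℝ)
        + gbinom x q * fdiff^[q+1] f (n:ℝ) := Finset.sum_range_succ _ q
  have E3 : ∑ j ∈ Finset.range (q+1), gbinom (x+1) j * fdiff^[j] f (n:ℝ)
      = (∑ j ∈ Finset.range q, gbinom (x+1) (j+1) * fdiff^[j+1] f (n:ℝ)) + f (n:ℝ) := by
    rw [Finset.sum_range_succ']
    congr 1
    simp [gbinom_zero]
  have E4 : ∑ j ∈ Finset.range (q+1), gbinom x j * fdiff^[j] f (n:ℝ)
      = (∑ j ∈ Finset.range q, gbinom x (j+1) * fdiff^[j+1] f (n:ℝ)) + f (n:ℝ) := by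
    rw [Finset.sum_range_succ']
    congr 1
    simp [gbinom_zero]
  have E5 : ∑ j ∈ Finset.range q, gbinom (x+1) (j+1) * fdiff^[j+1] f (n:ℝ)
      = ∑ j ∈ Finset.range q, gbinom x (j+1) * fdiff^[j+1] f (n:ℝ)
        + ∑ j ∈ Finset.range q, gbinom x j * fdiff^[j+1] f (n:ℝ) := by
    rw [← Finset.sum_add_distrib]
    exact Finset.sum_congr rfl fun j _ => by rw [gbinom_pascal]; ring
  linarith

lemma core {f : ℝ → ℝ} {q : ℕ}
    (hKf : (∃ a > (0:ℝ), ConvexOrderOn f q (Set.Ioi a)) ∨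
      (∃ a > (0:ℝ), ConvexOrderOn (fun x => -f x) q (Set.Ioi a)))
    (hDf : Filter.Tendsto (fun n : ℕ => fdiff^[q+1] f n) Filter.atTop (nhds 0)) :
    ∀ x : ℝ, 0 < x → Filter.Tendsto (rho f q x) Filter.atTop (nhds 0) := by
  have habs0 : Filter.Tendsto (fun n : ℕ => |fdiff^[q+1] f n|) Filter.atTop (nhds 0) := by
    have := hDf.abs
    simpa using this
  have hsq : ∀ x : ℝ, 0 < x → x < 1 → Filter.Tendsto (rho f q x) Filter.atTop (nhds 0) := by
    intro x hx0 hx1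
    have habs : ∀ᶠ n : ℕ in Filter.atTop, |rho f q x n| ≤ |fdiff^[q+1] f n| := by
      rcases hKf with ⟨a, _, hconv⟩ | ⟨a, _, hconv⟩
      · filter_upwards [tendsto_natCast_atTop_atTop.eventually_gt_atTop a] with n hn
        have hb := bound hconv hn hx0 hx1
        rw [show (n:ℝ) + x = x + (n:ℝ) by ring] at hb
        exact le_trans hb (le_abs_self _)
      · filter_upwards [tendsto_natCast_atTop_atTop.eventually_gt_atTop a] with n hn
        have hb := bound hconv hn hx0 hx1
        rw [show (n:ℝ) + x = x + (n:ℝ) by ring] at hb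
        have hsum : ∑ j ∈ Finset.range (q+1), gbinom x j * fdiff^[j] (fun s => -f s) (n:ℝ)
            = -∑ j ∈ Finset.range (q+1), gbinom x j * fdiff^[j] f (n:ℝ) := by
          rw [← Finset.sum_neg_distrib]
          exact Finset.sum_congr rfl fun j _ => by rw [fdiff_iter_neg]; ring
        rw [hsum, fdiff_iter_neg] at hb
        have : |rho f q x n| ≤ -fdiff^[q+1] f (n:ℝ) := by
          rw [rho]
          calc |f (x + (n:ℝ)) - ∑ j ∈ Finset.range (q+1), gbinom x j * fdiff^[j] f (n:ℝ)|
              = |-f (x + (n:ℝ)) - -∑ j ∈ Finset.range (q+1), gbinom x j * fdiff^[j] f (n:ℝ)| := by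
                rw [abs_sub_comm]
                congr 1
                ring
            _ ≤ -fdiff^[q+1] f (n:ℝ) := hb
        exact le_trans this (neg_le_abs _)
    refine squeeze_zero_norm' ?_ habs0
    filter_upwards [habs] with n hn
    simpa [Real.norm_eq_abs] using hn
  have hone : Filter.Tendsto (rho f q 1) Filter.atTop (nhds 0) := by
    cases q with
    | zero =>
      have : rho f 0 1 = fun n : ℕ => fdiff^[1] f n := by
        funext n
        rw [rho]
        simp only [zero_add, Finset.sum_range_one, gbinom_zero, one_mul]
        rw [show fdiff^[1] f (n:ℝ) = f ((n:ℝ)+1) - f (n:ℝ) from rfl,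
          show fdiff^[0] f (n:ℝ) = f (n:ℝ) from rfl,
          show (1:ℝ) + (n:ℝ) = (n:ℝ) + 1 by ring]
      rw [this]
      exact hDf
    | succ q' =>
      have : rho f (q'+1) 1 = fun _ : ℕ => (0:ℝ) := by
        funext n
        rw [rho]
        rw [Finset.sum_range_succ' (fun j => gbinom 1 j * fdiff^[j] f (n:ℝ)) (q'+1)]
        rw [Finset.sum_range_succ' (fun j => gbinom 1 (j+1) * fdiff^[j+1] f (n:ℝ)) q']
        have hz : ∑ j ∈ Finset.range q', gbinom 1 (j+1+1) * fdiff^[j+1+1] f (n:ℝ) = 0 :=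
          Finset.sum_eq_zero fun j _ => by rw [gbinom_one_big]; ring
        rw [hz, gbinom_one_one, gbinom_zero]
        rw [show fdiff^[0+1] f (n:ℝ) = f ((n:ℝ)+1) - f (n:ℝ) from rfl,
          show fdiff^[0] f (n:ℝ) = f (n:ℝ) from rfl,
          show (1:ℝ) + (n:ℝ) = (n:ℝ) + 1 by ring]
        ring
      rw [this]
      exact tendsto_const_nhds
  have hrec : ∀ x : ℝ, Filter.Tendsto (rho f q x) Filter.atTop (nhds 0) →
      Filter.Tendsto (rho f q (x+1)) Filter.atTop (nhds 0) := by
    intro x h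
    have hshift : Filter.Tendsto (fun n : ℕ => rho f q x (n+1)) Filter.atTop (nhds 0) :=
      h.comp (tendsto_add_atTop_nat 1)
    have hterm : Filter.Tendsto (fun n : ℕ => gbinom x q * fdiff^[q+1] f n)
        Filter.atTop (nhds 0) := by
      have := hDf.const_mul (gbinom x q)
      simpa using this
    have := hshift.add hterm
    simp only [add_zero] at this
    exact this.congr fun n => (rho_rec f q x n).symm
  suffices key : ∀ k : ℕ, ∀ x : ℝ, 0 < x → x ≤ k →
      Filter.Tendsto (rho f q x) Filter.atTop (nhds 0) by
    intro x hx
    obtain ⟨k, hk⟩ := exists_nat_ge x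
    exact key k x hx hk
  intro k
  induction k with
  | zero =>
    intro x hx hxk
    norm_num at hxk
    linarith
  | succ k ih =>
    intro x hx hxk
    rcases lt_trichotomy x 1 with h1 | h1 | h1
    · exact hsq x hx h1
    · subst h1; exact hone
    · have hx' : 0 < x - 1 := by linarith
      have hxk' : x - 1 ≤ k := by push_cast at hxk ⊢; linarith
      have h := hrec (x-1) (ih (x-1) hx' hxk')
      rw [sub_add_cancel] at h
      exact h

lemma idA {m : ℕ} {f g : ℝ → ℝ} (hd : ∀ t > (0:ℝ), fdiff^[m+1] f t = g t) :
    ∀ (n : ℕ) (y : ℝ), 0 < y →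
      f (y + n) = (∑ j ∈ Finset.range (m+1), gbinom (n:ℝ) j * fdiff^[j] f y)
        + ∑ k ∈ Finset.range n, gbinom ((n:ℝ) - k - 1) m * g (y + k) := by
  intro n
  induction n with
  | zero =>
    intro y hy
    simp only [Nat.cast_zero, Finset.range_zero, Finset.sum_empty, add_zero]
    rw [Finset.sum_range_succ' (fun j => gbinom 0 j * fdiff^[j] f y) m]
    rw [Finset.sum_eq_zero fun j _ => by rw [gbinom_zero_left]; ring]
    rw [gbinom_zero]
    rw [show fdiff^[0] f y = f y from rfl]
    ring
  | succ n ihn =>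
    intro y hy
    have h1 : y + ((n+1:ℕ):ℝ) = (y+1) + (n:ℝ) := by push_cast; ring
    rw [h1, ihn (y+1) (by linarith)]
    have EA : ∑ j ∈ Finset.range (m+1), gbinom (n:ℝ) j * fdiff^[j] f (y+1)
        = ∑ j ∈ Finset.range (m+1), gbinom (n:ℝ) j * fdiff^[j] f y
          + ((∑ j ∈ Finset.range m, gbinom (n:ℝ) j * fdiff^[j+1] f y)
            + gbinom (n:ℝ) m * g y) := by
      have e1 : ∑ j ∈ Finset.range (m+1), gbinom (n:ℝ) j * fdiff^[j] f (y+1)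
          = ∑ j ∈ Finset.range (m+1), gbinom (n:ℝ) j * fdiff^[j] f y
            + ∑ j ∈ Finset.range (m+1), gbinom (n:ℝ) j * fdiff^[j+1] f y := by
        rw [← Finset.sum_add_distrib]
        refine Finset.sum_congr rfl fun j _ => ?_
        rw [show fdiff^[j] f (y+1) = fdiff^[j] f y + fdiff^[j+1] f y by
          rw [fdiff_succ_apply]; ring]
        ring
      rw [e1, Finset.sum_range_succ (fun j => gbinom (n:ℝ) j * fdiff^[j+1] f y) m,
        hd y hy]
    have EB : ∑ j ∈ Finset.range (m+1), gbinom ((n+1:ℕ):ℝ) j * fdiff^[j] f y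
        = ∑ j ∈ Finset.range (m+1), gbinom (n:ℝ) j * fdiff^[j] f y
          + ∑ j ∈ Finset.range m, gbinom (n:ℝ) j * fdiff^[j+1] f y := by
      rw [Finset.sum_range_succ' (fun j => gbinom ((n+1:ℕ):ℝ) j * fdiff^[j] f y) m,
        Finset.sum_range_succ' (fun j => gbinom (n:ℝ) j * fdiff^[j] f y) m]
      have e2 : ∑ j ∈ Finset.range m, gbinom ((n+1:ℕ):ℝ) (j+1) * fdiff^[j+1] f y
          = ∑ j ∈ Finset.range m, gbinom (n:ℝ) (j+1) * fdiff^[j+1] f y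
            + ∑ j ∈ Finset.range m, gbinom (n:ℝ) j * fdiff^[j+1] f y := by
        rw [← Finset.sum_add_distrib]
        refine Finset.sum_congr rfl fun j _ => ?_
        rw [show ((n+1:ℕ):ℝ) = (n:ℝ)+1 by push_cast; ring, gbinom_pascal]
        ring
      rw [e2, gbinom_zero, gbinom_zero]
      ring
    have EC : ∑ k ∈ Finset.range (n+1), gbinom (((n+1:ℕ):ℝ)) m * 0 = 0 := by simp
    have ED : ∑ k ∈ Finset.range (n+1), gbinom (((n+1:ℕ):ℝ) - k - 1) m * g (y + k)
        = gbinom (n:ℝ) m * g y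
          + ∑ k ∈ Finset.range n, gbinom ((n:ℝ) - k - 1) m * g (y + 1 + k) := by
      rw [Finset.sum_range_succ'
        (fun k => gbinom (((n+1:ℕ):ℝ) - k - 1) m * g (y + k)) n]
      have e3 : ∑ k ∈ Finset.range n, gbinom (((n+1:ℕ):ℝ) - (k+1:ℕ) - 1) m * g (y + (k+1:ℕ))
          = ∑ k ∈ Finset.range n, gbinom ((n:ℝ) - k - 1) m * g (y + 1 + k) := by
        refine Finset.sum_congr rfl fun k _ => ?_
        rw [show (((n+1:ℕ):ℝ) - ((k+1:ℕ):ℝ) - 1) = (n:ℝ) - k - 1 by push_cast; ring,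
          show y + ((k+1:ℕ):ℝ) = y + 1 + (k:ℝ) by push_cast; ring]
      rw [e3]
      rw [show (((n+1:ℕ):ℝ) - ((0:ℕ):ℝ) - 1) = (n:ℝ) by push_cast; ring,
        show y + ((0:ℕ):ℝ) = y by push_cast; ring]
      ring
    have e4 : ∑ k ∈ Finset.range n, gbinom ((n:ℝ) - k - 1) m * g (y + 1 + k)
        = ∑ k ∈ Finset.range n, gbinom ((n:ℝ) - k - 1) m * g ((y+1) + k) := rfl
    linarith [EA, EB, ED]

end Stmt7Aux

open Stmt7Aux

/-- Iterated form of the analog of Gauss' limit. -/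
theorem stmt_7 (m p : ℕ) (g f : ℝ → ℝ) (hgD : DD p g) (hgK : EvK (p + m) g)
    (hΔ : ∀ x > (0 : ℝ), fdiff^[m + 1] f x = g x)
    (h0 : ∀ k ∈ Finset.Icc 1 (m + 1), f k = 0)
    (hK : ∀ k ≤ m, EvK (p + m) (fdiff^[k] f))
    (x : ℝ) (hx : 0 < x) :
    Filter.Tendsto (fun n : ℕ =>
      (∑ k ∈ Finset.Icc 1 (n - 1), gbinom ((n : ℝ) - k - 1) m * g k) -
        (∑ k ∈ Finset.range n, gbinom ((n : ℝ) - k - 1) m * g (x + k)) +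
        (∑ j ∈ Finset.Icc 1 (p + m), gbinom x j * (fdiff^[j] f) n) -
        ∑ j ∈ Finset.Icc 1 m, gbinom (n : ℝ) j * (fdiff^[j] f) x)
      Filter.atTop (nhds (f x)) := by
  have hKf : (∃ a > (0:ℝ), ConvexOrderOn f (p+m) (Set.Ioi a)) ∨
      (∃ a > (0:ℝ), ConvexOrderOn (fun t => -f t) (p+m) (Set.Ioi a)) := by
    have h := hK 0 (Nat.zero_le m)
    simpa [EvK, Function.iterate_zero_apply] using h
  have hDf : Filter.Tendsto (fun n : ℕ => fdiff^[(p+m)+1] f n) Filter.atTop (nhds 0) := by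
    have hgD' : Filter.Tendsto (fun n : ℕ => fdiff^[p] g n) Filter.atTop (nhds 0) := hgD
    refine Filter.Tendsto.congr' ?_ hgD'
    filter_upwards [Filter.eventually_gt_atTop 0] with n hn
    have hpos : (0:ℝ) < n := by exact_mod_cast hn
    show fdiff^[p] g (n:ℝ) = fdiff^[p+m+1] f (n:ℝ)
    rw [show fdiff^[p+m+1] f = fdiff^[p] (fdiff^[m+1] f) from
      Function.iterate_add_apply fdiff p (m+1) f]
    exact (fdiff_iter_congr hΔ p (n:ℝ) hpos).symm
  have hcore := core hKf hDf x hx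
  have hfinal : Filter.Tendsto (fun n : ℕ => f x - rho f (p+m) x n)
      Filter.atTop (nhds (f x)) := by
    have := hcore.const_sub (f x)
    simpa using this
  refine Filter.Tendsto.congr' ?_ hfinal
  filter_upwards [Filter.eventually_ge_atTop 1] with n hn
  have hA := idA hΔ
  -- piece 1 : the first sum equals f n
  have hfn : ∑ k ∈ Finset.Icc 1 (n-1), gbinom ((n:ℝ) - k - 1) m * g k = f n := by
    have h1 := hA (n-1) 1 one_pos
    have hz : ∑ j ∈ Finset.range (m+1), gbinom (((n-1:ℕ)):ℝ) j * fdiff^[j] f 1 = 0 := by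
      refine Finset.sum_eq_zero fun j hj => ?_
      rw [fdiff_iter_zero j f 1 fun i hi => ?_, mul_zero]
      rw [show (1:ℝ) + (i:ℝ) = ((i+1:ℕ):ℝ) by push_cast; ring]
      exact h0 (i+1) (Finset.mem_Icc.mpr ⟨by omega, by
        have := Finset.mem_range.mp hj; omega⟩)
    rw [hz, zero_add] at h1
    have hc : (1:ℝ) + ((n-1:ℕ):ℝ) = (n:ℝ) := by
      rw [Nat.cast_sub hn]; push_cast; ring
    rw [hc] at h1
    rw [← Finset.Ico_add_one_right_eq_Icc, show n - 1 + 1 = n from by omega,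
      Finset.sum_Ico_eq_sum_range, h1]
    refine Finset.sum_congr rfl fun i hi => ?_
    rw [show ((n:ℝ) - ((1+i:ℕ):ℝ) - 1) = ((n-1:ℕ):ℝ) - (i:ℝ) - 1 by
        rw [Nat.cast_sub hn]; push_cast; ring,
      show (((1+i:ℕ)):ℝ) = 1 + (i:ℝ) by push_cast; ring]
  have h2 := hA n x hx
  have h3 : ∑ j ∈ Finset.Icc 1 (p+m), gbinom x j * fdiff^[j] f (n:ℝ)
      = ∑ j ∈ Finset.range (p+m+1), gbinom x j * fdiff^[j] f (n:ℝ) - f (n:ℝ) := by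
    rw [Finset.sum_range_succ' (fun j => gbinom x j * fdiff^[j] f (n:ℝ)) (p+m), gbinom_zero,
      show fdiff^[0] f (n:ℝ) = f (n:ℝ) from rfl, one_mul]
    rw [← Finset.Ico_add_one_right_eq_Icc, Finset.sum_Ico_eq_sum_range,
      show p + m + 1 - 1 = p + m from by omega]
    rw [show (∑ i ∈ Finset.range (p+m), gbinom x (1+i) * fdiff^[1+i] f (n:ℝ))
        = ∑ i ∈ Finset.range (p+m), gbinom x (i+1) * fdiff^[i+1] f (n:ℝ) from
      Finset.sum_congr rfl fun i _ => by rw [Nat.add_comm 1 i]]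
    ring
  have h4 : ∑ j ∈ Finset.Icc 1 m, gbinom (n:ℝ) j * fdiff^[j] f x
      = ∑ j ∈ Finset.range (m+1), gbinom (n:ℝ) j * fdiff^[j] f x - f x := by
    rw [Finset.sum_range_succ' (fun j => gbinom (n:ℝ) j * fdiff^[j] f x) m, gbinom_zero,
      show fdiff^[0] f x = f x from rfl, one_mul]
    rw [← Finset.Ico_add_one_right_eq_Icc, Finset.sum_Ico_eq_sum_range,
      show m + 1 - 1 = m from by omega]
    rw [show (∑ i ∈ Finset.range m, gbinom (n:ℝ) (1+i) * fdiff^[1+i] f x)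
        = ∑ i ∈ Finset.range m, gbinom (n:ℝ) (i+1) * fdiff^[i+1] f x from
      Finset.sum_congr rfl fun i _ => by rw [Nat.add_comm 1 i]]
    ring
  have hrho : rho f (p+m) x n
      = f (x + (n:ℝ)) - ∑ j ∈ Finset.range (p+m+1), gbinom x j * fdiff^[j] f (n:ℝ) := rfl
  show f x - rho f (p+m) x n = _
  rw [hrho, hfn, h3, h4, h2]
  ring
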